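/- arXiv:2509.18594 — 5 statements merged into one kernel-verified Lean document; each statement's English description precedes it below -/
import Mathlib

section
/- For every even integer m ≥ 6, the spectral radius of S⁻_{(m+4)/2,2} satisfies ρ(S⁻_{(m+4)/2,2}) > (1 + √(4m − 5))/2. -/
open SimpleGraph Matrix

/-- `H` occurs as a subgraph of `G`: an injective map sending adjacent vertices to
adjacent vertices. -/
def ContainsSub {α β : Type*} (H : SimpleGraph α) (G : SimpleGraph β) : Prop :=
  ∃ f : α → β, Function.Injective f ∧ ∀ ⦃a b⦄, H.Adj a b → G.Adj (f a) (f b)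

/-- The graph `H(4,3)`: a 4-cycle `0-1-2-3-0` and a triangle `0-4-5-0`
sharing the common vertex `0`. -/
def H43 : SimpleGraph (Fin 6) :=
  SimpleGraph.fromEdgeSet {s(0,1), s(1,2), s(2,3), s(3,0), s(0,4), s(4,5), s(5,0)}

/-- `G` is `H(4,3)`-free. -/
def H43Free {β : Type*} (G : SimpleGraph β) : Prop := ¬ ContainsSub H43 G

open Classical in
/-- The real adjacency matrix of a simple graph. -/
noncomputable def adjMat {V : Type*} (G : SimpleGraph V) : Matrix V V ℝ :=
  fun i j => if G.Adj i j then 1 else 0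

/-- The spectral radius of a finite simple graph: the largest eigenvalue of its
adjacency matrix. -/
noncomputable def specRad {V : Type*} [Fintype V] (G : SimpleGraph V) : ℝ :=
  sSup {t : ℝ | ∃ x : V → ℝ, x ≠ 0 ∧ (adjMat G).mulVec x = t • x}

/-- `S_{n,2} = K₂ ∨ (n-2)K₁`: vertices `0` and `1` are adjacent to everything. -/
def Sgraph (n : ℕ) : SimpleGraph (Fin n) where
  Adj i j := i ≠ j ∧ (i.val < 2 ∨ j.val < 2)
  symm := by constructor; rintro i j ⟨h1, h2⟩; exact ⟨h1.symm, h2.symm⟩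
  loopless := by constructor; rintro i ⟨h1, _⟩; exact h1 rfl

/-- `S⁻_{n,2}`: the graph `S_{n,2}` with the edge `{1,2}` (an edge incident to a
vertex of degree two) deleted. -/
def SgraphMinus (n : ℕ) : SimpleGraph (Fin n) where
  Adj i j := i ≠ j ∧ (i.val < 2 ∨ j.val < 2) ∧
    ¬(i.val = 1 ∧ j.val = 2) ∧ ¬(i.val = 2 ∧ j.val = 1)
  symm := by
    constructor
    rintro i j ⟨h1, h2, h3, h4⟩
    exact ⟨h1.symm, h2.symm, fun hc => h4 ⟨hc.2, hc.1⟩, fun hc => h3 ⟨hc.2, hc.1⟩⟩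
  loopless := by constructor; rintro i ⟨h1, _⟩; exact h1 rfl

/-- The graph obtained from `S_{k,2}` (on vertices `0,…,k-1`, with `0,1` dominating)
by joining the maximum degree vertex `0` to `l` new vertices `k,…,k+l-1`. -/
def Fgraph (k l : ℕ) : SimpleGraph (Fin (k + l)) where
  Adj i j := i ≠ j ∧ (i.val = 0 ∨ j.val = 0 ∨
    (i.val < k ∧ j.val < k ∧ (i.val = 1 ∨ j.val = 1)))
  symm := by
    constructor
    rintro i j ⟨h1, h2⟩
    refine ⟨h1.symm, ?_⟩
    rcases h2 with h | h | ⟨ha, hb, hc⟩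
    · exact Or.inr (Or.inl h)
    · exact Or.inl h
    · exact Or.inr (Or.inr ⟨hb, ha, hc.symm⟩)
  loopless := by constructor; rintro i ⟨h1, _⟩; exact h1 rfl

/-- The star `K_{1,t}` with center `0`. -/
def starG (t : ℕ) : SimpleGraph (Fin (t + 1)) where
  Adj i j := i ≠ j ∧ (i.val = 0 ∨ j.val = 0)
  symm := by constructor; rintro i j ⟨h1, h2⟩; exact ⟨h1.symm, h2.symm⟩
  loopless := by constructor; rintro i ⟨h1, _⟩; exact h1 rfl

/-- `e(S)`: the number of edges of `G` with both endpoints in `S`. -/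
noncomputable def eIn {V : Type*} (G : SimpleGraph V) (S : Set V) : ℕ :=
  {e ∈ G.edgeSet | ∀ v ∈ e, v ∈ S}.ncard

/-- `e(S,T)`: the number of edges of `G` with one endpoint in `S` and the other in `T`. -/
noncomputable def eBetween {V : Type*} (G : SimpleGraph V) (S T : Set V) : ℕ :=
  {e ∈ G.edgeSet | ∃ a ∈ S, ∃ b ∈ T, e = s(a, b)}.ncard

/-- `G` attains the maximum spectral radius among all `H(4,3)`-free graphs with `m`
edges and no isolated vertices. -/
def IsExtremal (m : ℕ) {V : Type*} [Fintype V] (G : SimpleGraph V) : Prop :=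
  H43Free G ∧ G.edgeSet.ncard = m ∧ (∀ v : V, ∃ w, G.Adj v w) ∧
    ∀ (n : ℕ) (G' : SimpleGraph (Fin n)), H43Free G' → G'.edgeSet.ncard = m →
      (∀ v, ∃ w, G'.Adj v w) → specRad G' ≤ specRad G

/-!
Write `m = 2s + 2`, so that the graph is `S⁻_{s+3,2}` with adjacency matrix `A`, and let
`θ = (1 + √(8s+3))/2`, the positive root of `θ² = θ + 2s + 1/2`. The vector `x` with entries
`θ³ + θ²`, `θ³ + θ² - θ`, `θ² + θ` at the vertices `0, 1, 2` and `2θ² + 2θ - 1` at the remaining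
ones is positive and satisfies `A x ≥ θ x` entrywise, with equality except at the vertices `0`
and `1`, where the slack is `1/4`. Hence the Rayleigh quotient of `x` exceeds `θ`, and so does the
largest eigenvalue of the symmetric matrix `A`.
-/

theorem Matrix.IsHermitian.exists_eigenvalue_gt_of_lt_rayleigh {n : Type*} [Fintype n]
    [DecidableEq n] {A : Matrix n n ℝ} (hA : A.IsHermitian) {θ : ℝ} {x : n → ℝ}
    (h : θ * (x ⬝ᵥ x) < A *ᵥ x ⬝ᵥ x) : ∃ t, θ < t ∧ ∃ y ≠ 0, A *ᵥ y = t • y := by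
  set T := toEuclideanLin A
  have hx : WithLp.toLp 2 x ≠ 0 := by
    rintro hx
    simp_all
  have : Nontrivial (EuclideanSpace ℝ n) := ⟨_, _, hx⟩
  obtain ⟨v, hv⟩ :=
    (isSymmetric_toEuclideanLin_iff.mpr hA).hasEigenvalue_iSup_of_finiteDimensional
      |>.exists_hasEigenvector
  refine ⟨_, ?_, WithLp.ofLp v, by simpa using hv.2,
    by simpa using congrArg WithLp.ofLp hv.apply_eq_smul⟩
  have hbdd : BddAbove (Set.range fun z : {z : EuclideanSpace ℝ n // z ≠ 0} =>
      RCLike.re (inner ℝ (T z) (z : EuclideanSpace ℝ n)) / ‖(z : EuclideanSpace ℝ n)‖ ^ 2) := by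
    refine ⟨‖LinearMap.toContinuousLinearMap T‖, ?_⟩
    rintro _ ⟨z, rfl⟩
    exact (le_abs_self _).trans ((LinearMap.toContinuousLinearMap T).rayleighQuotient_le_norm z)
  refine lt_of_lt_of_le ?_ (le_ciSup hbdd ⟨_, hx⟩)
  have hnorm : ‖WithLp.toLp 2 x‖ ^ 2 = x ⬝ᵥ x := by
    rw [← real_inner_self_eq_norm_sq, EuclideanSpace.inner_toLp_toLp]; simp
  have hpos : 0 < x ⬝ᵥ x := hnorm ▸ pow_pos (norm_pos_iff.mpr hx) 2
  dsimp only
  rw [hnorm, lt_div_iff₀ hpos]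
  simpa [T, EuclideanSpace.inner_toLp_toLp, dotProduct_comm] using h

theorem isHermitian_adjMat {V : Type*} (G : SimpleGraph V) : (adjMat G).IsHermitian := by
  ext i j
  simp only [conjTranspose_apply, adjMat, star_trivial]
  congr 1
  exact propext (G.adj_comm j i)

theorem le_specRad_of_mulVec_eq_smul {V : Type*} [Fintype V] (G : SimpleGraph V) {t : ℝ}
    {y : V → ℝ} (hy : y ≠ 0) (h : adjMat G *ᵥ y = t • y) : t ≤ specRad G := by
  classical
  refine le_csSup ((Module.End.finite_hasEigenvalue (toLin' (adjMat G))).subset ?_).bddAbove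
    ⟨y, hy, h⟩
  rintro s ⟨z, hz, hs⟩
  exact Module.End.hasEigenvalue_of_hasEigenvector ⟨Module.End.mem_eigenspace_iff.mpr hs, hz⟩

theorem lt_specRad_of_smul_lt_mulVec {V : Type*} [Fintype V] (G : SimpleGraph V) {θ : ℝ}
    {x : V → ℝ} (hx : ∀ i, 0 < x i) (h : θ • x < adjMat G *ᵥ x) : θ < specRad G := by
  classical
  obtain ⟨hle, i, hi⟩ := Pi.lt_def.mp h
  have hray : θ * (x ⬝ᵥ x) < adjMat G *ᵥ x ⬝ᵥ x := by
    rw [← smul_eq_mul, ← smul_dotProduct]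
    exact Finset.sum_lt_sum (fun j _ => mul_le_mul_of_nonneg_right (hle j) (hx j).le)
      ⟨i, Finset.mem_univ i, mul_lt_mul_of_pos_right hi (hx i)⟩
  obtain ⟨t, hθt, y, hy, hyt⟩ := (isHermitian_adjMat G).exists_eigenvalue_gt_of_lt_rayleigh hray
  exact hθt.trans_le (le_specRad_of_mulVec_eq_smul G hy hyt)

def classVec (s : ℕ) (a b c d : ℝ) (i : Fin (s + 3)) : ℝ :=
  if i.val = 0 then a else if i.val = 1 then b else if i.val = 2 then c else d

theorem classVec_pos {s : ℕ} {a b c d : ℝ} (ha : 0 < a) (hb : 0 < b) (hc : 0 < c) (hd : 0 < d)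
    (i : Fin (s + 3)) : 0 < classVec s a b c d i := by
  unfold classVec
  split_ifs <;> assumption

theorem smul_classVec (s : ℕ) (θ a b c d : ℝ) :
    θ • classVec s a b c d = classVec s (θ * a) (θ * b) (θ * c) (θ * d) := by
  ext i
  simp only [Pi.smul_apply, smul_eq_mul, classVec]
  split_ifs <;> rfl

theorem classVec_lt_classVec {s : ℕ} {a b c d a' b' c' d' : ℝ} (ha : a < a') (hb : b ≤ b')
    (hc : c ≤ c') (hd : d ≤ d') : classVec s a b c d < classVec s a' b' c' d' := by
  refine Pi.lt_def.mpr ⟨fun i => ?_, ⟨0, by omega⟩, by simpa [classVec] using ha⟩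
  unfold classVec
  split_ifs
  exacts [ha.le, hb, hc, hd]

theorem adjMat_SgraphMinus_mulVec_classVec (s : ℕ) (a b c d : ℝ) :
    adjMat (SgraphMinus (s + 3)) *ᵥ classVec s a b c d =
      classVec s (b + c + s * d) (a + s * d) a (a + b) := by
  ext ⟨i, hi⟩
  simp only [mulVec, dotProduct, Fin.sum_univ_succ, classVec, adjMat, SgraphMinus, ne_eq,
    Fin.ext_iff, Fin.val_succ, Fin.val_zero]
  rcases i with _ | _ | _ | i <;> simp [add_assoc]

theorem lt_specRad_SgraphMinus (s : ℕ) {θ : ℝ} (hθ : 0 < θ) (hθs : θ ^ 2 = θ + 2 * s + 1 / 2) :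
    θ < specRad (SgraphMinus (s + 3)) := by
  have slack : θ ^ 3 + θ ^ 2 - θ + (θ ^ 2 + θ) + s * (2 * θ ^ 2 + 2 * θ - 1) =
      θ * (θ ^ 3 + θ ^ 2) + 1 / 4 := by
    linear_combination (1 / 2 - θ ^ 2 - θ) * hθs
  refine lt_specRad_of_smul_lt_mulVec (x := classVec s
    (θ ^ 3 + θ ^ 2) (θ ^ 3 + θ ^ 2 - θ) (θ ^ 2 + θ) (2 * θ ^ 2 + 2 * θ - 1))
    _ (classVec_pos ?_ ?_ ?_ ?_) ?_
  · positivity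
  · nlinarith
  · positivity
  · nlinarith
  rw [smul_classVec, adjMat_SgraphMinus_mulVec_classVec]
  apply classVec_lt_classVec <;> linarith

/-- For every even `m ≥ 6`, `ρ(S⁻_{(m+4)/2,2}) > (1 + √(4m−5))/2`. -/
theorem stmt3 (m : ℕ) (hm : 6 ≤ m) (hme : Even m) :
    (1 + Real.sqrt (4 * (m : ℝ) - 5)) / 2 < specRad (SgraphMinus ((m + 4) / 2)) := by
  obtain ⟨k, hk⟩ := hme
  obtain ⟨s, rfl⟩ : ∃ s, m = 2 * s + 2 := ⟨k - 1, by omega⟩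
  rw [show (2 * s + 2 + 4) / 2 = s + 3 by omega]
  have hroot := Real.sq_sqrt (show (0 : ℝ) ≤ 4 * ((2 * s + 2 : ℕ) : ℝ) - 5 by push_cast; linarith)
  refine lt_specRad_SgraphMinus s (by positivity) ?_
  push_cast at hroot ⊢
  linear_combination hroot / 4
end

section
/- Let m be an even integer and l an odd integer with l ≥ 3 and m > l + 1. Then ρ(F′_{m,l}) < ρ(F′_{m,1}). -/
open SimpleGraph Matrix

/-!
Let `F(a + 2, L)` be `Fgraph (a + 2) L`. Its vertex classes `{0}`, `{1}`, `{2, …, a + 1}` and the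
`L` pendant vertices form an equitable partition, and the quotient matrix has characteristic
equation `(x² - a)(x² - a - L) = (x + a)²`. A root `t > 0` with `t² > a` lifts to a positive
eigenvector, so by the Collatz–Wielandt bound `t` is the spectral radius. For `l = 2d + 1` the two
graphs of the theorem are `F(a + 2, 2d + 1)` and `F(a + d + 2, 1)`, and the quotient polynomial of
the second is that of the first minus `d (2x + 2a - 1)`. It is therefore negative at the spectral
radius of the first graph, so its own largest root, the spectral radius of the second graph, is
larger.
-/

open Finset

/-- Collatz–Wielandt bound. -/
theorem Matrix.abs_le_of_vecMul_le {n : Type*} [Fintype n] {A : Matrix n n ℝ}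
    (hA : ∀ i j, 0 ≤ A i j) {z : n → ℝ} (hz : ∀ i, 0 < z i) {c : ℝ} (hzA : z ᵥ* A ≤ c • z)
    {t : ℝ} {x : n → ℝ} (hx : x ≠ 0) (hAx : A *ᵥ x = t • x) : |t| ≤ c := by
  have habs : |t| • |x| ≤ A *ᵥ |x| := fun i => by
    calc |t| * |x i| = |∑ j, A i j * x j| := by
          rw [← abs_mul, ← smul_eq_mul, ← Pi.smul_apply, ← hAx]; rfl
      _ ≤ ∑ j, |A i j * x j| := abs_sum_le_sum_abs _ _
      _ = (A *ᵥ |x|) i := by simp only [abs_mul, abs_of_nonneg (hA i _)]; rfl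
  have hpos : 0 < z ⬝ᵥ |x| := by
    obtain ⟨i, hi⟩ := Function.ne_iff.mp hx
    exact sum_pos' (fun j _ => mul_nonneg (hz j).le (abs_nonneg _))
      ⟨i, mem_univ i, mul_pos (hz i) (abs_pos.mpr hi)⟩
  refine le_of_mul_le_mul_right ?_ hpos
  calc |t| * (z ⬝ᵥ |x|) = z ⬝ᵥ (|t| • |x|) := by rw [dotProduct_smul, smul_eq_mul]
    _ ≤ z ⬝ᵥ (A *ᵥ |x|) := dotProduct_le_dotProduct_of_nonneg_left habs fun i => (hz i).le
    _ = (z ᵥ* A) ⬝ᵥ |x| := dotProduct_mulVec _ _ _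
    _ ≤ (c • z) ⬝ᵥ |x| := dotProduct_le_dotProduct_of_nonneg_right hzA (abs_nonneg x)
    _ = c * (z ⬝ᵥ |x|) := by rw [smul_dotProduct, smul_eq_mul]

section SpectralRadius

variable {V : Type*} (G : SimpleGraph V)

theorem adjMat_apply [DecidableRel G.Adj] (i j : V) :
    adjMat G i j = if G.Adj i j then 1 else 0 := by
  unfold adjMat; congr

theorem adjMat_nonneg (i j : V) : 0 ≤ adjMat G i j := by
  classical
  rw [adjMat_apply]; split_ifs <;> norm_num

theorem adjMat_transpose : (adjMat G)ᵀ = adjMat G := by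
  classical
  ext i j
  simp only [transpose_apply, adjMat_apply, G.adj_comm]

variable [Fintype V]

theorem abs_le_of_adjMat_mulVec_le {z : V → ℝ} (hz : ∀ i, 0 < z i) {c : ℝ}
    (hzc : adjMat G *ᵥ z ≤ c • z) {t : ℝ} {x : V → ℝ} (hx : x ≠ 0)
    (hAx : adjMat G *ᵥ x = t • x) : |t| ≤ c := by
  refine Matrix.abs_le_of_vecMul_le (adjMat_nonneg G) hz ?_ hx hAx
  rwa [← adjMat_transpose, vecMul_transpose]

theorem specRad_le_of_mulVec_le {z : V → ℝ} (hz : ∀ i, 0 < z i) {c : ℝ} (hc : 0 ≤ c)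
    (hzc : adjMat G *ᵥ z ≤ c • z) : specRad G ≤ c :=
  Real.sSup_le (fun _ ⟨_, hx, hAx⟩ =>
    (le_abs_self _).trans (abs_le_of_adjMat_mulVec_le G hz hzc hx hAx)) hc

theorem le_specRad_of_mulVec_eq {t : ℝ} {x : V → ℝ} (hx : x ≠ 0)
    (hAx : adjMat G *ᵥ x = t • x) : t ≤ specRad G := by
  have hrow : adjMat G *ᵥ (fun _ => 1) ≤ (Fintype.card V : ℝ) • fun _ => 1 := fun i => by
    classical
    calc (adjMat G *ᵥ fun _ => 1) i = ∑ j, adjMat G i j := by simp [mulVec, dotProduct]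
      _ ≤ ∑ _j : V, (1 : ℝ) := sum_le_sum fun j _ => by
          rw [adjMat_apply]; split_ifs <;> norm_num
      _ = _ := by simp
  refine le_csSup ⟨Fintype.card V, fun s ⟨y, hy, hAy⟩ => ?_⟩ ⟨x, hx, hAx⟩
  exact (le_abs_self s).trans (abs_le_of_adjMat_mulVec_le G (fun _ => one_pos) hrow hy hAy)

theorem specRad_eq_of_mulVec_eq [Nonempty V] {z : V → ℝ} (hz : ∀ i, 0 < z i) {t : ℝ}
    (ht : 0 ≤ t) (hAz : adjMat G *ᵥ z = t • z) : specRad G = t :=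
  le_antisymm (specRad_le_of_mulVec_le G hz ht hAz.le)
    (le_specRad_of_mulVec_eq G (fun h => (hz (Classical.arbitrary V)).ne' (congrFun h _)) hAz)

end SpectralRadius

/-- The characteristic polynomial of the quotient matrix of the equitable partition of
`Fgraph (a + 2) L`. -/
def fgraphCharPoly (a L x : ℝ) : ℝ := (x ^ 2 - a) * (x ^ 2 - a - L) - (x + a) ^ 2

theorem exists_fgraphCharPoly_eq_zero_of_neg {a L y : ℝ} (ha : 0 ≤ a) (hL : 0 ≤ L)
    (hy : 0 ≤ y) (h : fgraphCharPoly a L y < 0) : ∃ t, y < t ∧ fgraphCharPoly a L t = 0 := by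
  set B := y + a + L + 2
  have hB : 0 < fgraphCharPoly a L B := by
    have hu : 2 * B ≤ B ^ 2 - a - L := by nlinarith
    have hv : B ^ 2 - a - L ≤ B ^ 2 - a := by linarith
    have hw : (B + a) ^ 2 < (2 * B) ^ 2 := by nlinarith
    unfold fgraphCharPoly
    nlinarith [mul_le_mul hu hv (by linarith) (by linarith)]
  have hcont : Continuous (fgraphCharPoly a L) := by unfold fgraphCharPoly; fun_prop
  obtain ⟨t, ht, hroot⟩ :=
    intermediate_value_Ioo (by linarith : y ≤ B) hcont.continuousOn ⟨h, hB⟩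
  exact ⟨t, ht.1, hroot⟩

theorem Fin.sum_univ_two_add_add {M : Type*} [AddCommMonoid M] (a l : ℕ)
    (f : Fin (a + 2 + l) → M) :
    ∑ i, f i = f ⟨0, by omega⟩ + f ⟨1, by omega⟩ + ∑ i : Fin a, f ⟨i + 2, by omega⟩ +
      ∑ j : Fin l, f ⟨a + 2 + j, by omega⟩ := by
  rw [Fin.sum_univ_add, Fin.sum_univ_succ, Fin.sum_univ_succ, ← add_assoc]
  rfl

noncomputable def fgraphPerronVec (a l : ℕ) (t : ℝ) (i : Fin (a + 2 + l)) : ℝ :=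
  if i.val = 0 then t * (t ^ 2 - a) else if i.val = 1 then t * (t + a)
  else if i.val < a + 2 then t ^ 2 + t else t ^ 2 - a

theorem fgraphPerronVec_pos {a l : ℕ} {t : ℝ} (ht : 0 < t) (hta : a < t ^ 2)
    (i : Fin (a + 2 + l)) : 0 < fgraphPerronVec a l t i := by
  unfold fgraphPerronVec
  split_ifs <;> nlinarith

theorem adjMat_Fgraph_mulVec_fgraphPerronVec {a l : ℕ} {t : ℝ}
    (h : fgraphCharPoly a l t = 0) :
    adjMat (Fgraph (a + 2) l) *ᵥ fgraphPerronVec a l t = t • fgraphPerronVec a l t := by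
  classical
  unfold fgraphCharPoly at h
  ext ⟨v, hv⟩
  simp only [mulVec, dotProduct, adjMat_apply, Fin.sum_univ_two_add_add, Fgraph, fgraphPerronVec,
    Pi.smul_apply, smul_eq_mul, ne_eq, Fin.mk.injEq]
  rcases v with _ | _ | v
  · have hrow : t * (t + a) + a * (t ^ 2 + t) + l * (t ^ 2 - a) = t * (t * (t ^ 2 - a)) := by
      linear_combination -h
    simpa +arith [-smul_add, -sum_sub_distrib] using hrow
  · have hrow : t * (t ^ 2 - a) + a * (t ^ 2 + t) = t * (t * (t + a)) := by ring
    simpa [-smul_add] using hrow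
  · by_cases hva : v < a
    · have hrow : t * (t ^ 2 - a) + t * (t + a) = t * (t ^ 2 + t) := by ring
      simpa +arith [hva] using hrow
    · simp +arith [hva]

theorem specRad_Fgraph_eq {a l : ℕ} {t : ℝ} (ht : 0 < t) (hta : a < t ^ 2)
    (h : fgraphCharPoly a l t = 0) : specRad (Fgraph (a + 2) l) = t :=
  specRad_eq_of_mulVec_eq _ (fgraphPerronVec_pos ht hta) ht.le
    (adjMat_Fgraph_mulVec_fgraphPerronVec h)

theorem specRad_Fgraph_lt (a d : ℕ) (hd : 1 ≤ d) :
    specRad (Fgraph (a + 2) (2 * d + 1)) < specRad (Fgraph (a + d + 2) 1) := by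
  have hd_one : (1 : ℝ) ≤ d := by exact_mod_cast hd
  set L : ℝ := 2 * d + 1
  set y := √(a + L)
  have hy : y ^ 2 = a + L := Real.sq_sqrt (by positivity)
  have hy_pos : 0 < y := Real.sqrt_pos.mpr (by positivity)
  have hfy : fgraphCharPoly a L y < 0 := by
    unfold fgraphCharPoly; rw [hy]; nlinarith
  obtain ⟨t, hyt, ht⟩ :=
    exists_fgraphCharPoly_eq_zero_of_neg (by positivity) (by positivity) hy_pos.le hfy
  have ht2 : a + L < t ^ 2 := by nlinarith
  have ht1 : 1 < t := by nlinarith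
  have hft : fgraphCharPoly (a + d) 1 t < 0 := by
    have hshift :
        fgraphCharPoly (a + d) 1 t = fgraphCharPoly a L t - d * (2 * t + 2 * a - 1) := by
      unfold fgraphCharPoly; ring
    rw [hshift, ht]
    nlinarith
  obtain ⟨s, hts, hs⟩ :=
    exists_fgraphCharPoly_eq_zero_of_neg (by positivity) zero_le_one (by linarith) hft
  rw [specRad_Fgraph_eq (t := t) (by linarith) (by linarith) (by push_cast; exact ht),
    specRad_Fgraph_eq (t := s) (by linarith) (by push_cast; nlinarith) (by push_cast; exact hs)]
  exact hts

/-- Fang–You. If `m` is even, `l` is odd, `l ≥ 3` and `m > l + 1`,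
then `ρ(F'_{m,l}) < ρ(F'_{m,1})`. -/
theorem stmt5 (m l : ℕ) (hme : Even m) (hlo : Odd l) (hl : 3 ≤ l) (hml : l + 1 < m) :
    specRad (Fgraph ((m - l + 3) / 2) l) < specRad (Fgraph ((m - 1 + 3) / 2) 1) := by
  obtain ⟨d, rfl⟩ := hlo
  obtain ⟨n, rfl⟩ := hme
  have hk : (n + n - (2 * d + 1) + 3) / 2 = (n - d - 1) + 2 := by omega
  have hk' : (n + n - 1 + 3) / 2 = (n - d - 1) + d + 2 := by omega
  rw [hk, hk']
  exact specRad_Fgraph_lt (n - d - 1) d (by omega)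
end

section
/- Let G be a finite simple graph with m edges and spectral radius ρ, let x be a nonnegative nonzero eigenvector of the adjacency matrix of G corresponding to ρ, and let u* be a vertex at which x attains its maximum entry. If the neighborhood N(u*) is an independent set in G, then ρ ≤ √m. -/
open SimpleGraph Matrix

/-!
Applying the eigenvalue equation twice writes `ρ² x u` as the sum of `x z` over the walks
`u - w - z`, and each term is at most `x u`. These walks number `∑_{w ∈ N(u)} deg w`, which is
at most `m` when `N(u)` is independent: the edges at distinct neighbours of `u` are then
distinct. Dividing by `x u > 0` gives `ρ² ≤ m`.
-/

open Finset

namespace SimpleGraph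

variable {V : Type*} (G : SimpleGraph V)

theorem adjMat_eq_adjMatrix [DecidableRel G.Adj] : adjMat G = G.adjMatrix ℝ := by
  ext i j
  simp only [adjMat, adjMatrix_apply]
  congr

variable [Fintype V]

theorem sum_degree_le_card_edgeFinset_of_isIndepSet [DecidableEq V] [DecidableRel G.Adj]
    {s : Finset V} (hs : G.IsIndepSet (s : Set V)) :
    ∑ w ∈ s, G.degree w ≤ #G.edgeFinset := by
  have hdisj : (s : Set V).PairwiseDisjoint (G.incidenceFinset ·) := by
    intro a ha b hb hab
    rw [Function.onFun, ← disjoint_coe, coe_incidenceFinset, coe_incidenceFinset,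
      Set.disjoint_iff_inter_eq_empty]
    exact G.incidenceSet_inter_incidenceSet_of_not_adj (hs ha hb hab) hab
  calc ∑ w ∈ s, G.degree w = #(s.biUnion (G.incidenceFinset ·)) := by
        rw [card_biUnion hdisj]
        simp only [card_incidenceFinset_eq_degree]
    _ ≤ #G.edgeFinset := card_le_card (biUnion_subset.mpr fun w _ => G.incidenceFinset_subset w)

theorem sq_mul_le_sum_degree_mul_of_mulVec_eq [DecidableRel G.Adj] {t : ℝ} {x : V → ℝ}
    (hx : (adjMat G).mulVec x = t • x) {u : V} (hmax : ∀ v, x v ≤ x u) :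
    t ^ 2 * x u ≤ (∑ w ∈ G.neighborFinset u, (G.degree w : ℝ)) * x u := by
  have heig : ∀ v, ∑ w ∈ G.neighborFinset v, x w = t * x v := fun v => by
    rw [← adjMatrix_mulVec_apply, ← adjMat_eq_adjMatrix, hx, Pi.smul_apply, smul_eq_mul]
  calc t ^ 2 * x u = ∑ w ∈ G.neighborFinset u, ∑ z ∈ G.neighborFinset w, x z := by
        simp only [heig, ← mul_sum]
        ring
    _ ≤ ∑ w ∈ G.neighborFinset u, ∑ z ∈ G.neighborFinset w, x u := by
        gcongr with w _ z _
        exact hmax z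
    _ = (∑ w ∈ G.neighborFinset u, (G.degree w : ℝ)) * x u := by
        simp only [sum_const, card_neighborFinset_eq_degree, nsmul_eq_mul, sum_mul]

end SimpleGraph

/-- If `x` is a nonnegative nonzero eigenvector of `A(G)` for `ρ(G)`
with maximum entry at `u`, and `N(u)` is an independent set, then `ρ(G) ≤ √m`. -/
theorem stmt9 {V : Type*} [Fintype V] (m : ℕ) (G : SimpleGraph V)
    (hedges : G.edgeSet.ncard = m)
    (x : V → ℝ) (hxnn : ∀ v, 0 ≤ x v) (hx0 : x ≠ 0)
    (heig : (adjMat G).mulVec x = specRad G • x)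
    (u : V) (hmaxx : ∀ v, x v ≤ x u)
    (hind : ∀ a ∈ G.neighborSet u, ∀ b ∈ G.neighborSet u, ¬ G.Adj a b) :
    specRad G ≤ Real.sqrt m := by
  classical
  have hxu : 0 < x u := by
    refine (hxnn u).lt_of_ne fun h => hx0 (funext fun v => ?_)
    exact le_antisymm ((hmaxx v).trans h.ge) (hxnn v)
  have hindep : G.IsIndepSet (G.neighborFinset u : Set V) := by
    intro a ha b hb _
    rw [coe_neighborFinset] at ha hb
    exact hind a ha b hb
  have hdeg : ∑ w ∈ G.neighborFinset u, (G.degree w : ℝ) ≤ m := by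
    rw [← hedges, ← coe_edgeFinset, Set.ncard_coe_finset]
    exact_mod_cast G.sum_degree_le_card_edgeFinset_of_isIndepSet hindep
  have hsq : specRad G ^ 2 ≤ m := le_of_mul_le_mul_right
    ((G.sq_mul_le_sum_degree_mul_of_mulVec_eq heig hmaxx).trans
      (mul_le_mul_of_nonneg_right hdeg hxu.le)) hxu
  exact (le_abs_self _).trans (Real.abs_le_sqrt hsq)
end

section
/- Let H be a connected finite simple graph containing no subgraph isomorphic to P₂ ∪ P₃ (the disjoint union of an edge and a path on 3 vertices). Then either H is a star K_{1,t} for some t ≥ 0 (including the single vertex K₁), or H has at most 4 vertices. -/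
/-!
If `ab` and `cd` are vertex-disjoint edges, no edge leaves `{a, b, c, d}`, since it would
extend one of them to a `P₃` avoiding the other; so in a connected graph on at least five
vertices any two edges meet. A pairwise intersecting set of edges is a star or a triangle,
and a triangle cannot cover a fourth non-isolated vertex, so one vertex lies on every edge.
-/

open SimpleGraph Matrix

namespace SimpleGraph

variable {V : Type*} {G : SimpleGraph V}

def IsP2P3Free (G : SimpleGraph V) : Prop :=
  ¬ ∃ a b c d e : V, a ≠ b ∧ a ≠ c ∧ a ≠ d ∧ a ≠ e ∧ b ≠ c ∧ b ≠ d ∧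
    b ≠ e ∧ c ≠ d ∧ c ≠ e ∧ d ≠ e ∧ G.Adj a b ∧ G.Adj c d ∧ G.Adj d e

lemma Preconnected.mem_of_adj_closed (hG : G.Preconnected) {S : Set V} {u : V} (hu : u ∈ S)
    (hS : ∀ ⦃x y⦄, x ∈ S → G.Adj x y → y ∈ S) (v : V) : v ∈ S := by
  obtain ⟨p⟩ := hG u v
  induction p with
  | nil => exact hu
  | cons h _ ih => exact ih (hS hu h)

lemma IsP2P3Free.eq_or_eq_or_eq_of_adj (hG : G.IsP2P3Free) {a b c d y : V}
    (hab : G.Adj a b) (hcd : G.Adj c d) (hac : a ≠ c) (had : a ≠ d) (hbc : b ≠ c) (hbd : b ≠ d)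
    (hay : G.Adj a y) : y = b ∨ y = c ∨ y = d := by
  by_contra! hy
  obtain ⟨hyb, hyc, hyd⟩ := hy
  exact hG ⟨c, d, y, a, b, hcd.ne, Ne.symm hyc, Ne.symm hac, Ne.symm hbc, Ne.symm hyd,
    Ne.symm had, Ne.symm hbd, hay.ne.symm, hyb, hab.ne, hcd, hay.symm, hab⟩

lemma IsP2P3Free.card_le_four_of_adj_of_adj [Fintype V] (hG : G.IsP2P3Free) (hconn : G.Connected)
    {a b c d : V} (hab : G.Adj a b) (hcd : G.Adj c d) (hac : a ≠ c) (had : a ≠ d) (hbc : b ≠ c)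
    (hbd : b ≠ d) : Fintype.card V ≤ 4 := by
  classical
  have hclosed :
      ∀ ⦃x y⦄, x ∈ ({a, b, c, d} : Set V) → G.Adj x y → y ∈ ({a, b, c, d} : Set V) := by
    intro x y hx hxy
    simp only [Set.mem_insert_iff, Set.mem_singleton_iff] at hx ⊢
    rcases hx with rfl | rfl | rfl | rfl
    · have := hG.eq_or_eq_or_eq_of_adj hab hcd hac had hbc hbd hxy; tauto
    · have := hG.eq_or_eq_or_eq_of_adj hab.symm hcd hbc hbd hac had hxy; tauto
    · have := hG.eq_or_eq_or_eq_of_adj hcd hab hac.symm hbc.symm had.symm hbd.symm hxy; tauto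
    · have := hG.eq_or_eq_or_eq_of_adj hcd.symm hab had.symm hbd.symm hac.symm hbc.symm hxy; tauto
  have huniv : (Finset.univ : Finset V) ⊆ {a, b, c, d} := fun v _ => by
    simpa using hconn.preconnected.mem_of_adj_closed (u := a) (by simp) hclosed v
  exact (Finset.card_le_card huniv).trans Finset.card_le_four

lemma exists_forall_adj_eq_or_eq [Fintype V]
    (hmeet : ∀ ⦃a b c d⦄, G.Adj a b → G.Adj c d → a = c ∨ a = d ∨ b = c ∨ b = d)
    (hdeg : ∀ v, ∃ w, G.Adj v w) (hcard : 4 ≤ Fintype.card V) :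
    ∃ x, ∀ ⦃v w⦄, G.Adj v w → v = x ∨ w = x := by
  classical
  obtain ⟨a⟩ : Nonempty V := Fintype.card_pos_iff.mp (by omega)
  obtain ⟨b, hab⟩ := hdeg a
  by_contra! hno
  have hextend : ∀ ⦃a b⦄, G.Adj a b → ∃ c, G.Adj b c ∧ c ≠ a := by
    intro a b hab
    obtain ⟨v, w, hvw, hva, hwa⟩ := hno a
    rcases hmeet hvw hab with h | h | h | h
    · exact absurd h hva
    · exact ⟨w, h ▸ hvw, hwa⟩
    · exact absurd h hwa
    · exact ⟨v, h ▸ hvw.symm, hva⟩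
  obtain ⟨c, hbc, hca⟩ := hextend hab
  obtain ⟨d, had, hdb⟩ := hextend hab.symm
  obtain rfl : d = c := by
    rcases hmeet had hbc with h | h | h | h
    exacts [absurd h hab.ne, absurd h.symm hca, absurd h hdb, h]
  obtain ⟨v, -, hv⟩ := Finset.exists_mem_notMem_of_card_lt_card
    (s := {a, b, d}) (t := Finset.univ) (by simpa using Finset.card_le_three.trans_lt (by omega))
  obtain ⟨w, hvw⟩ := hdeg v
  simp only [Finset.mem_insert, Finset.mem_singleton, not_or] at hv
  have := hmeet hvw hab
  have := hmeet hvw hbc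
  have := hmeet hvw had
  grind

lemma exists_iso_starG [Fintype V] {x : V} (hx : ∀ ⦃v w⦄, G.Adj v w → v = x ∨ w = x)
    (hdeg : ∀ v, ∃ w, G.Adj v w) : ∃ t, Nonempty (G ≃g starG t) := by
  classical
  have hadj : ∀ v w, G.Adj v w ↔ v ≠ w ∧ (v = x ∨ w = x) := by
    have hadj_x : ∀ v, v ≠ x → G.Adj x v := fun v hv => by
      obtain ⟨z, hvz⟩ := hdeg v
      obtain rfl : z = x := (hx hvz).resolve_left hv
      exact hvz.symm
    refine fun v w => ⟨fun h => ⟨h.ne, hx h⟩, ?_⟩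
    rintro ⟨hvw, rfl | rfl⟩
    exacts [hadj_x w hvw.symm, (hadj_x v hvw).symm]
  let e : V ≃ Fin (Fintype.card {v // v ≠ x} + 1) :=
    (Equiv.optionSubtypeNe x).symm.trans
      ((Equiv.optionCongr (Fintype.equivFin _)).trans (finSuccEquiv _).symm)
  have he : ∀ v, (e v).val = 0 ↔ v = x := fun v => by
    rw [Fin.val_eq_zero_iff, ← Equiv.eq_symm_apply]
    rfl
  refine ⟨_, ⟨e, fun {v w} => ?_⟩⟩
  show (e v ≠ e w ∧ ((e v).val = 0 ∨ (e w).val = 0)) ↔ G.Adj v w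
  rw [he, he, hadj, e.injective.ne_iff]

end SimpleGraph

/-- A connected graph with no `P₂ ∪ P₃` subgraph is a star `K_{1,t}`
(for some `t ≥ 0`, including `K₁`) or has at most `4` vertices. -/
theorem stmt13 {V : Type*} [Fintype V] (H : SimpleGraph V) (hconn : H.Connected)
    (hfree : ¬ ∃ a b c d e : V, a ≠ b ∧ a ≠ c ∧ a ≠ d ∧ a ≠ e ∧ b ≠ c ∧ b ≠ d ∧
      b ≠ e ∧ c ≠ d ∧ c ≠ e ∧ d ≠ e ∧ H.Adj a b ∧ H.Adj c d ∧ H.Adj d e) :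
    (∃ t : ℕ, Nonempty (H ≃g starG t)) ∨ Fintype.card V ≤ 4 := by
  by_cases hsmall : Fintype.card V ≤ 4
  · exact Or.inr hsmall
  left
  have : Nontrivial V := Fintype.one_lt_card_iff_nontrivial.mp (by omega)
  have hdeg := hconn.preconnected.exists_adj_of_nontrivial
  have hmeet : ∀ ⦃a b c d⦄, H.Adj a b → H.Adj c d → a = c ∨ a = d ∨ b = c ∨ b = d := by
    intro a b c d hab hcd
    by_contra! hdisj
    obtain ⟨hac, had, hbc, hbd⟩ := hdisj
    exact hsmall (IsP2P3Free.card_le_four_of_adj_of_adj hfree hconn hab hcd hac had hbc hbd)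
  obtain ⟨x, hx⟩ := exists_forall_adj_eq_or_eq hmeet hdeg (by omega)
  exact exists_iso_starG hx hdeg
end

section
/- For every even integer m ≥ 4, the graph S⁻_{(m+4)/2,2} contains no subgraph isomorphic to H(4,3). -/
/-! A copy of `H(4,3)` in `G` would carry the three disjoint edges `12`, `30`, `45` of `H(4,3)` to
three disjoint edges of `G`, each of which needs its own vertex in any vertex cover; but the two
dominating vertices `0, 1` of `S_{n,2}` already cover all edges of `S⁻_{n,2}`. -/

open SimpleGraph Matrix

theorem ContainsSub.isContained {V W : Type*} {H : SimpleGraph W} {G : SimpleGraph V}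
    (h : ContainsSub H G) : H ⊑ G :=
  let ⟨f, hf, hadj⟩ := h
  ⟨⟨⟨f, fun hab => hadj hab⟩, hf⟩⟩

namespace SimpleGraph

variable {V : Type*} {G : SimpleGraph V}

theorem IsVertexCover.card_le_encard_of_disjoint_edges {ι : Type*} {a b : ι → V} {c : Set V}
    (hc : G.IsVertexCover c) (hab : ∀ i, G.Adj (a i) (b i))
    (hdisj : Function.Injective (Sum.elim a b)) : ENat.card ι ≤ c.encard := by
  classical
  let g : ι → c := fun i =>
    if h : a i ∈ c then ⟨a i, h⟩ else ⟨b i, (hc (hab i)).resolve_left h⟩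
  have hg : Function.Injective g := by
    intro i j hij
    have hval := congrArg Subtype.val hij
    simp only [g] at hval
    split_ifs at hval
    · exact Sum.inl_injective (@hdisj (.inl i) (.inl j) hval)
    · exact absurd (@hdisj (.inl i) (.inr j) hval) Sum.inl_ne_inr
    · exact absurd (@hdisj (.inr i) (.inl j) hval) Sum.inr_ne_inl
    · exact Sum.inr_injective (@hdisj (.inr i) (.inr j) hval)
  exact ENat.card_le_card_of_injective hg

theorem card_le_vertexCoverNum_of_disjoint_edges {ι : Type*} {a b : ι → V}
    (hab : ∀ i, G.Adj (a i) (b i)) (hdisj : Function.Injective (Sum.elim a b)) :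
    ENat.card ι ≤ G.vertexCoverNum := by
  obtain ⟨c, hcard, hc⟩ := G.vertexCoverNum_exists
  exact hcard ▸ hc.card_le_encard_of_disjoint_edges hab hdisj

end SimpleGraph

theorem three_le_vertexCoverNum_H43 : 3 ≤ H43.vertexCoverNum := by
  simpa using card_le_vertexCoverNum_of_disjoint_edges (G := H43)
    (a := ![1, 3, 4]) (b := ![2, 0, 5]) (fun i => by fin_cases i <;> simp [H43]) (by decide)

theorem SgraphMinus_le_Sgraph (n : ℕ) : SgraphMinus n ≤ Sgraph n :=
  fun _ _ h => ⟨h.1, h.2.1⟩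

theorem vertexCoverNum_Sgraph_le_two (n : ℕ) : (Sgraph n).vertexCoverNum ≤ 2 := by
  have hc : (Sgraph n).IsVertexCover {i | i.val < 2} := fun _ _ h => h.2
  refine hc.vertexCoverNum_le.trans ?_
  calc {i : Fin n | i.val < 2}.encard ≤ (Finset.range 2 : Set ℕ).encard :=
        Set.encard_le_encard_of_injOn (fun _ hi => by simpa using hi) Fin.val_injective.injOn
    _ = 2 := by rw [Set.encard_coe_eq_coe_finsetCard, Finset.card_range]; rfl

theorem stmt17_general (m : ℕ) :
    ¬ ContainsSub H43 (SgraphMinus ((m + 4) / 2)) := by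
  intro h
  have : (3 : ℕ∞) ≤ 2 :=
    calc 3 ≤ H43.vertexCoverNum := three_le_vertexCoverNum_H43
      _ ≤ (SgraphMinus _).vertexCoverNum :=
        h.isContained.vertexCoverNum_le_vertexCoverNum
      _ ≤ (Sgraph _).vertexCoverNum := vertexCoverNum_mono (SgraphMinus_le_Sgraph _)
      _ ≤ 2 := vertexCoverNum_Sgraph_le_two _
  exact absurd this (by decide)

/-- For every even `m ≥ 4`, the graph `S⁻_{(m+4)/2,2}` contains no
subgraph isomorphic to `H(4,3)`. -/
theorem stmt17 (m : ℕ) (hm : 4 ≤ m) (hme : Even m) :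
    ¬ ContainsSub H43 (SgraphMinus ((m + 4) / 2)) :=
  stmt17_general m
end
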